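/- arXiv:1412.6307 — 9 statements merged into one kernel-verified Lean document; each statement's English description precedes it below -/
import Mathlib

section
/- Let G be a metrisable locally compact Hausdorff group with left Haar measure θ, let K ⊆ G be compact and U a neighbourhood of K. Then there exists a compact neighbourhood V of the identity with θ(∂V) = 0 such that K ⊆ K·V ⊆ U. -/
open MeasureTheory Pointwise Metric

theorem exists_compact_unit_nhd_null_frontier
    {G : Type*} [TopologicalSpace G] [TopologicalSpace.MetrizableSpace G] [Group G] [IsTopologicalGroup G]
    [T2Space G] [LocallyCompactSpace G] [MeasurableSpace G] [BorelSpace G]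
    (θ : Measure G) [θ.IsHaarMeasure]
    (K U : Set G) (hK : IsCompact K) (hU : U ∈ nhdsSet K) :
    ∃ V : Set G, IsCompact V ∧ V ∈ nhds (1 : G) ∧ θ (frontier V) = 0 ∧
      K ⊆ K * V ∧ K * V ⊆ U := by
  letI : MetricSpace G := TopologicalSpace.metrizableSpaceMetric G
  obtain ⟨O, hOopen, hKO, hOU⟩ := mem_nhdsSet_iff_exists.mp hU
  obtain ⟨W, hW, hKW⟩ := compact_open_separated_mul_right hK hOopen hKO
  obtain ⟨C, hCc, hCn⟩ := exists_compact_mem_nhds (1 : G)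
  have hCW : C ∩ W ∈ nhds (1 : G) := Filter.inter_mem hCn hW
  obtain ⟨r0, hr0pos, hr0⟩ := (Metric.nhds_basis_closedBall.mem_iff).mp hCW
  have hsub : ∀ r : ℝ, r ≤ r0 → sphere (1 : G) r ⊆ C := by
    intro r hr x hx
    exact (hr0 (closedBall_subset_closedBall hr (sphere_subset_closedBall hx))).1
  have hcnt : Set.Countable {i : Set.Ioc (0 : ℝ) r0 | 0 < θ (sphere (1 : G) i)} := by
    apply Measure.countable_meas_pos_of_disjoint_of_meas_iUnion_ne_top θ
      (As := fun i : Set.Ioc (0 : ℝ) r0 => sphere (1 : G) (i : ℝ))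
    · intro i; exact isClosed_sphere.measurableSet
    · intro i j hij
      refine Set.disjoint_left.mpr fun x hx hx' => ?_
      apply hij
      ext
      rw [mem_sphere] at hx hx'
      rw [← hx, ← hx']
    · refine ne_top_of_le_ne_top (hCc.measure_lt_top.ne) (measure_mono ?_)
      exact Set.iUnion_subset fun i => hsub i i.2.2
  have huncnt : ¬ (Set.univ : Set (Set.Ioc (0 : ℝ) r0)).Countable := by
    rw [Set.countable_univ_iff, ← Cardinal.mk_le_aleph0_iff]
    intro h
    have := Cardinal.mk_Ioc_real hr0pos
    rw [this] at h
    exact absurd (h.trans_lt Cardinal.aleph0_lt_continuum) (lt_irrefl _)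
  obtain ⟨i, -, hi⟩ : ∃ i ∈ (Set.univ : Set (Set.Ioc (0 : ℝ) r0)),
      i ∉ {i : Set.Ioc (0 : ℝ) r0 | 0 < θ (sphere (1 : G) i)} := by
    by_contra h
    push_neg at h
    exact huncnt (hcnt.mono fun i _ => h i trivial)
  simp only [Set.mem_setOf_eq, not_lt, le_zero_iff] at hi
  refine ⟨closedBall 1 i, ?_, ?_, ?_, ?_, ?_⟩
  · exact hCc.of_isClosed_subset isClosed_closedBall
      (fun x hx => (hr0 (closedBall_subset_closedBall i.2.2 hx)).1)
  · exact Metric.closedBall_mem_nhds 1 i.2.1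
  · exact measure_mono_null frontier_closedBall_subset_sphere hi
  · exact Set.subset_mul_left K (mem_closedBall_self i.2.1.le)
  · refine (Set.mul_subset_mul_left fun x hx => ?_).trans (hKW.trans hOU)
    exact (hr0 (closedBall_subset_closedBall i.2.2 hx)).2
end

section
/- Let G be a metrisable locally compact Hausdorff group with left Haar measure θ, let K ⊆ G be compact and U an open neighbourhood of K. Then there exists a neighbourhood W of K with θ(∂W) = 0 such that K ⊆ W ⊆ U. -/
open MeasureTheory

theorem exists_nhd_of_compact_null_frontier
    {G : Type*} [TopologicalSpace G] [TopologicalSpace.MetrizableSpace G] [Group G] [IsTopologicalGroup G]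
    [T2Space G] [LocallyCompactSpace G] [MeasurableSpace G] [BorelSpace G]
    (θ : Measure G) [θ.IsHaarMeasure]
    (K U : Set G) (hK : IsCompact K) (hUopen : IsOpen U) (hKU : K ⊆ U) :
    ∃ W : Set G, W ∈ nhdsSet K ∧ θ (frontier W) = 0 ∧ K ⊆ W ∧ W ⊆ U := by
  letI : MetricSpace G := TopologicalSpace.metrizableSpaceMetric G
  obtain ⟨L, hLcomp, hKL, hLU⟩ := exists_compact_between hK hUopen hKU
  obtain ⟨ε, hε, hεsub⟩ := hK.exists_thickening_subset_open isOpen_interior hKL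
  haveI : IsFiniteMeasure (θ.restrict L) :=
    ⟨by rw [Measure.restrict_apply_univ]; exact hLcomp.measure_lt_top⟩
  obtain ⟨r, hr, hrnull⟩ := exists_null_frontier_thickening (θ.restrict L) K hε
  refine ⟨Metric.thickening r K, ?_, ?_, ?_, ?_⟩
  · exact Metric.isOpen_thickening.mem_nhdsSet.2 (Metric.self_subset_thickening hr.1 K)
  · have hfr : frontier (Metric.thickening r K) ⊆ L := by
      refine (frontier_subset_closure.trans (Metric.closure_thickening_subset_cthickening r K)).trans ?_
      exact ((Metric.cthickening_subset_thickening' hε hr.2 K).trans hεsub).trans interior_subset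
    rwa [Measure.restrict_apply isClosed_frontier.measurableSet,
      Set.inter_eq_self_of_subset_left hfr] at hrnull
  · exact Metric.self_subset_thickening hr.1 K
  · exact ((Metric.thickening_mono hr.2.le K).trans hεsub).trans (interior_subset.trans hLU)
end

section
/- Let G be a locally compact Hausdorff group with left Haar measure θ and let W ⊆ G be relatively compact. Then for every ε > 0 there exists a compact neighbourhood U of the identity such that θ(∂W) ≤ θ(∂^U W) ≤ θ(∂W) + ε. -/
open MeasureTheory Pointwise

/-- The generalised van Hove boundary `∂^U W`. -/
def vanHoveBoundary {G : Type*} [TopologicalSpace G] [Group G] (U W : Set G) : Set G :=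
  (U * closure W ∩ closure Wᶜ) ∪ (U * closure Wᶜ ∩ closure W)

theorem vanHove_boundary_measure_approx
    {G : Type*} [TopologicalSpace G] [Group G] [IsTopologicalGroup G] [T2Space G]
    [LocallyCompactSpace G] [MeasurableSpace G] [BorelSpace G]
    (θ : Measure G) [θ.IsHaarMeasure]
    (W : Set G) (hW : IsCompact (closure W)) (ε : ENNReal) (hε : 0 < ε) :
    ∃ U : Set G, IsCompact U ∧ U ∈ nhds (1 : G) ∧
      θ (frontier W) ≤ θ (vanHoveBoundary U W) ∧
      θ (vanHoveBoundary U W) ≤ θ (frontier W) + ε := by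
  classical
  set C := closure W with hC
  set D := closure Wᶜ with hD
  have hCclosed : IsClosed C := isClosed_closure
  have hDclosed : IsClosed D := isClosed_closure
  have hF : frontier W = C ∩ D := frontier_eq_closure_inter_closure
  have hFcomp : IsCompact (frontier W) :=
    hW.of_isClosed_subset isClosed_frontier frontier_subset_closure
  -- transfer θ to the regular Haar measure `haar`
  set ν : Measure G := Measure.haar with hν
  set c : NNReal := Measure.haarScalarFactor θ ν with hc
  have key : ∀ s : Set G, IsCompact (closure s) → θ s = c • ν s := fun s hs =>
    Measure.measure_isMulInvariant_eq_smul_of_isCompact_closure θ ν hs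
  -- outer approximation of the frontier by an open set for ν
  have hδ : (ε / c : ENNReal) ≠ 0 := by
    refine (ENNReal.div_pos hε.ne' (by simp)).ne'
  obtain ⟨V, hFV, hVopen, hVlt⟩ :
      ∃ V, frontier W ⊆ V ∧ IsOpen V ∧ ν V < ν (frontier W) + ε / c :=
    Set.exists_isOpen_lt_add (μ := ν) (frontier W) hFcomp.measure_lt_top.ne hδ
  -- a fixed compact neighbourhood of 1
  obtain ⟨K, hKcomp, hKnhds⟩ := exists_compact_mem_nhds (1 : G)
  -- first separation: (K*C ∩ D) \ V is compact and disjoint from C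
  have hKC : IsCompact (K * C) := hKcomp.mul hW
  have hL1comp : IsCompact ((K * C ∩ D) \ V) :=
    (hKC.inter_right hDclosed).inter_right hVopen.isClosed_compl
  have hL1C : C ⊆ ((K * C ∩ D) \ V)ᶜ := by
    intro x hx hmem
    exact hmem.2 (hFV (by rw [hF]; exact ⟨hx, hmem.1.2⟩))
  obtain ⟨V₁, hV₁, hV₁sub⟩ :=
    compact_open_separated_mul_left hW hL1comp.isClosed.isOpen_compl hL1C
  -- second separation: C \ V is compact and disjoint from D
  have hL2comp : IsCompact (C \ V) := hW.inter_right hVopen.isClosed_compl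
  have hL2D : C \ V ⊆ Dᶜ := by
    intro x hx hxD
    exact hx.2 (hFV (by rw [hF]; exact ⟨hx.1, hxD⟩))
  obtain ⟨V₂, hV₂, hV₂sub⟩ :=
    compact_open_separated_mul_left hL2comp hDclosed.isOpen_compl hL2D
  -- choose compact U ⊆ K ∩ V₁ ∩ V₂⁻¹
  have hN : K ∩ V₁ ∩ V₂⁻¹ ∈ nhds (1 : G) := by
    refine Filter.inter_mem (Filter.inter_mem hKnhds hV₁) ?_
    simpa using inv_mem_nhds_one G hV₂
  obtain ⟨U, hUnhds, hUsub, hUcomp⟩ := local_compact_nhds hN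
  have hUK : U ⊆ K := fun x hx => (hUsub hx).1.1
  have hUV₁ : U ⊆ V₁ := fun x hx => (hUsub hx).1.2
  have hUV₂ : U ⊆ V₂⁻¹ := fun x hx => (hUsub hx).2
  have h1U : (1 : G) ∈ U := mem_of_mem_nhds hUnhds
  refine ⟨U, hUcomp, hUnhds, ?_, ?_⟩
  · -- lower bound: frontier W ⊆ vanHoveBoundary U W
    apply measure_mono
    intro x hx
    rw [hF] at hx
    exact Or.inl ⟨⟨1, h1U, x, hx.1, one_mul x⟩, hx.2⟩
  · -- upper bound
    have hsub : vanHoveBoundary U W ⊆ V := by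
      rintro x (⟨hxUC, hxD⟩ | ⟨hxUD, hxC⟩)
      · by_contra hxV
        have hxKC : x ∈ K * C := Set.mul_subset_mul_right hUK hxUC
        have : x ∈ (K * C ∩ D) \ V := ⟨⟨hxKC, hxD⟩, hxV⟩
        exact hV₁sub (Set.mul_subset_mul_right hUV₁ hxUC) this
      · by_contra hxV
        obtain ⟨u, hu, d, hd, rfl⟩ := hxUD
        have hu' : u⁻¹ ∈ V₂ := by simpa using hUV₂ hu
        have : d ∈ V₂ * (C \ V) := by
          refine ⟨u⁻¹, hu', u * d, ⟨hxC, hxV⟩, by group⟩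
        exact hV₂sub this hd
    -- vanHoveBoundary U W has compact closure
    have hvhsub : vanHoveBoundary U W ⊆ U * C ∪ C := by
      rintro x (⟨hx, -⟩ | ⟨-, hx⟩)
      · exact Or.inl hx
      · exact Or.inr hx
    have hUCcomp : IsCompact (U * C ∪ C) := (hUcomp.mul hW).union hW
    have hvhcl : IsCompact (closure (vanHoveBoundary U W)) :=
      hUCcomp.of_isClosed_subset isClosed_closure
        ((hUCcomp.isClosed.closure_subset_iff).mpr hvhsub)
    have hFcl : IsCompact (closure (frontier W)) := by
      rwa [isClosed_frontier.closure_eq]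
    calc θ (vanHoveBoundary U W) = c • ν (vanHoveBoundary U W) := key _ hvhcl
      _ ≤ c • ν V := by
          simp only [ENNReal.smul_def, smul_eq_mul]
          exact mul_le_mul_right (measure_mono hsub) _
      _ ≤ c • (ν (frontier W) + ε / c) := by
          simp only [ENNReal.smul_def, smul_eq_mul]
          exact mul_le_mul_right hVlt.le _
      _ = c • ν (frontier W) + (c : ENNReal) * (ε / c) := by
          simp only [ENNReal.smul_def, smul_eq_mul, mul_add]
      _ ≤ θ (frontier W) + ε := by
          rw [← key _ hFcl]
          exact add_le_add_right ENNReal.mul_div_le _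
end

section
/- In a topological group, if F is a compact set containing the identity, K is a compact set containing the identity, and A is compact, then ∂^K(F·A) ⊆ ∂^{K·F} A. -/
open Pointwise

lemma mul_closure_one_subset_closure {G : Type*} [TopologicalSpace G] [Group G]
    [IsTopologicalGroup G] (A : Set G) : A * (closure {1} : Set G) ⊆ closure A := by
  rintro x ⟨a, ha, g, hg, rfl⟩
  have h := (Homeomorph.mulLeft a).image_closure ({1} : Set G)
  have h2 : a * g ∈ (Homeomorph.mulLeft a) '' closure ({1} : Set G) := ⟨g, hg, rfl⟩
  rw [h] at h2
  simp only [Set.image_singleton, Homeomorph.coe_mulLeft, mul_one] at h2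
  exact closure_mono (Set.singleton_subset_iff.2 ha) h2

theorem vanHoveBoundary_mul_subset
    {G : Type*} [TopologicalSpace G] [Group G] [IsTopologicalGroup G]
    (F K A : Set G) (hF : IsCompact F) (hK : IsCompact K) (hA : IsCompact A)
    (heF : (1 : G) ∈ F) (heK : (1 : G) ∈ K) :
    vanHoveBoundary K (F * A) ⊆ vanHoveBoundary (K * F) A := by
  have key : closure (F * A) ⊆ F * closure A := by
    have h1 : closure (F * A) = (F * A) * (closure {1} : Set G) :=
      ((hF.mul hA).mul_closure_one_eq_closure).symm
    rw [h1, mul_assoc]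
    exact Set.mul_subset_mul_left (mul_closure_one_subset_closure A)
  have hcompl : closure (F * A)ᶜ ⊆ closure Aᶜ :=
    closure_mono (Set.compl_subset_compl.2 fun a ha => ⟨1, heF, a, ha, one_mul a⟩)
  rintro x (⟨hx1, hx2⟩ | ⟨hx1, hx2⟩)
  · -- x ∈ K * closure (F*A), x ∈ closure (F*A)ᶜ
    left
    refine ⟨?_, hcompl hx2⟩
    obtain ⟨k, hk, c, hc, rfl⟩ := hx1
    obtain ⟨f, hf, a, ha, rfl⟩ := key hc
    exact ⟨k * f, ⟨k, hk, f, hf, rfl⟩, a, ha, by simp [mul_assoc]⟩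
  · -- x ∈ K * closure (F*A)ᶜ, x ∈ closure (F*A)
    have hx2' : x ∈ F * closure A := key hx2
    have hx1' : x ∈ (K * F) * closure Aᶜ := by
      obtain ⟨k, hk, c, hc, rfl⟩ := hx1
      exact ⟨k * 1, ⟨k, hk, 1, heF, rfl⟩, c, hcompl hc, by simp⟩
    rcases (em (x ∈ closure A)) with hxA | hxA
    · exact Or.inr ⟨hx1', hxA⟩
    · left
      refine ⟨?_, ?_⟩
      · obtain ⟨f, hf, a, ha, rfl⟩ := hx2'
        exact ⟨1 * f, ⟨1, heK, f, hf, rfl⟩, a, ha, by simp⟩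
      · have : x ∈ A ∪ Aᶜ := by simp
        rcases this with h | h
        · exact absurd (subset_closure h) hxA
        · exact subset_closure h
end

section
/- Let (G, H, 𝓛) be a cut-and-project scheme, i.e., G and H are σ-compact locally compact Hausdorff abelian groups, 𝓛 is a discrete cocompact subgroup of G × H, the projection π_G restricted to 𝓛 is injective, and π_H(𝓛) is dense in H. Then for every non-empty open U ⊆ H there exists a compact F ⊆ G such that (F × U)·𝓛 = G × H. -/
open Pointwise

theorem exists_compact_strip_fundamental
    {G H : Type*}
    [TopologicalSpace G] [CommGroup G] [IsTopologicalGroup G] [T2Space G]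
    [LocallyCompactSpace G] [SigmaCompactSpace G]
    [TopologicalSpace H] [CommGroup H] [IsTopologicalGroup H] [T2Space H]
    [LocallyCompactSpace H] [SigmaCompactSpace H]
    (𝓛 : Subgroup (G × H)) [DiscreteTopology 𝓛]
    (hcocompact : ∃ 𝓕 : Set (G × H), IsCompact 𝓕 ∧ 𝓕 * (𝓛 : Set (G × H)) = Set.univ)
    (hinj : Set.InjOn Prod.fst (𝓛 : Set (G × H)))
    (hdense : Dense (Prod.snd '' (𝓛 : Set (G × H))))
    (U : Set H) (hUopen : IsOpen U) (hUne : U.Nonempty) :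
    ∃ F : Set G, IsCompact F ∧ (F ×ˢ U) * (𝓛 : Set (G × H)) = Set.univ := by
  obtain ⟨𝓕, h𝓕c, h𝓕⟩ := hcocompact
  -- every h : H lies in U * {ℓ.2} for some lattice point ℓ
  have key : ∀ h : H, ∃ ℓ : 𝓛, ∃ u ∈ U, u * (ℓ : G × H).2 = h := by
    intro h
    obtain ⟨u0, hu0⟩ := hUne
    have hVopen : IsOpen ((fun u => u⁻¹ * h) '' U) := by
      have : (fun u : H => u⁻¹ * h) '' U = (fun v : H => v * h) '' (U⁻¹) := by
        ext x
        constructor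
        · rintro ⟨u, hu, rfl⟩; exact ⟨u⁻¹, Set.inv_mem_inv.mpr hu, rfl⟩
        · rintro ⟨v, hv, rfl⟩; exact ⟨v⁻¹, hv, by simp⟩
      rw [this]
      exact (Homeomorph.mulRight h).isOpenMap _ hUopen.inv
    have hVne : ((fun u : H => u⁻¹ * h) '' U).Nonempty := ⟨u0⁻¹ * h, u0, hu0, rfl⟩
    obtain ⟨x, hxD, hxV⟩ := hdense.exists_mem_open hVopen hVne
    obtain ⟨ℓ, hℓ, rfl⟩ := hxD
    obtain ⟨u, hu, hux⟩ := hxV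
    exact ⟨⟨ℓ, hℓ⟩, u, hu, by rw [← hux]; group⟩
  -- open cover of 𝓕 by strips
  set c : 𝓛 → Set (G × H) := fun ℓ => Prod.snd ⁻¹' ((· * (ℓ : G × H).2) '' U) with hc
  have hcopen : ∀ ℓ : 𝓛, IsOpen (c ℓ) := fun ℓ =>
    ((Homeomorph.mulRight (ℓ : G × H).2).isOpenMap U hUopen).preimage continuous_snd
  have hcover : 𝓕 ⊆ ⋃ ℓ : 𝓛, c ℓ := by
    intro x _
    obtain ⟨ℓ, u, hu, huℓ⟩ := key x.2
    exact Set.mem_iUnion.mpr ⟨ℓ, ⟨u, hu, huℓ⟩⟩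
  obtain ⟨t, ht⟩ := h𝓕c.elim_finite_subcover c hcopen hcover
  refine ⟨⋃ ℓ ∈ t, (· * (ℓ : G × H).1⁻¹) '' (Prod.fst '' 𝓕), ?_, ?_⟩
  · exact t.finite_toSet.isCompact_biUnion fun ℓ _ =>
      (h𝓕c.image continuous_fst).image (continuous_mul_right _)
  · apply Set.eq_univ_of_univ_subset
    intro z _
    have hz : z ∈ 𝓕 * (𝓛 : Set (G × H)) := h𝓕 ▸ Set.mem_univ z
    obtain ⟨f, hf, l, hl, hfl⟩ := hz
    obtain ⟨ℓ, hℓt, hfc⟩ := Set.mem_iUnion₂.mp (ht hf)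
    obtain ⟨u, hu, huf⟩ := hfc
    refine ⟨(f.1 * (ℓ : G × H).1⁻¹, u), ⟨?_, hu⟩, (ℓ : G × H) * l, mul_mem ℓ.2 hl, ?_⟩
    · exact Set.mem_biUnion hℓt ⟨f.1, ⟨f, hf, rfl⟩, rfl⟩
    · rw [← hfl]
      have : u * (ℓ : G × H).2 = f.2 := huf
      ext
      · simp [Prod.mul_def]
      · simp [Prod.mul_def, ← this]; group
end

section
/- Let (G, H, 𝓛) be a cut-and-project scheme and let W ⊆ H be relatively compact. Then the projection set ⋏(W) := {π_G(ℓ) : ℓ ∈ 𝓛, π_H(ℓ) ∈ W} is uniformly discrete in G, i.e., there exists a neighbourhood U of the identity in G such that for every x ∈ G the translate x·U contains at most one point of ⋏(W). -/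
open Pointwise

/-- The projection set `⋏(W)` of a window `W` in internal space. -/
def projSet {G H : Type*} [Group G] [Group H] (𝓛 : Subgroup (G × H)) (W : Set H) : Set G :=
  {g : G | ∃ h ∈ W, (g, h) ∈ 𝓛}

theorem projSet_uniformly_discrete
    {G H : Type*}
    [TopologicalSpace G] [CommGroup G] [IsTopologicalGroup G] [T2Space G]
    [LocallyCompactSpace G] [SigmaCompactSpace G]
    [TopologicalSpace H] [CommGroup H] [IsTopologicalGroup H] [T2Space H]
    [LocallyCompactSpace H] [SigmaCompactSpace H]
    (𝓛 : Subgroup (G × H)) [DiscreteTopology 𝓛]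
    (hcocompact : ∃ 𝓕 : Set (G × H), IsCompact 𝓕 ∧ 𝓕 * (𝓛 : Set (G × H)) = Set.univ)
    (hinj : Set.InjOn Prod.fst (𝓛 : Set (G × H)))
    (hdense : Dense (Prod.snd '' (𝓛 : Set (G × H))))
    (W : Set H) (hW : IsCompact (closure W)) :
    ∃ U ∈ nhds (1 : G), ∀ x : G, (projSet 𝓛 W ∩ ({x} * U)).Subsingleton := by
  classical
  set K : Set H := closure W with hK
  have hK' : IsCompact (K⁻¹ * K) := hW.inv.mul hW
  obtain ⟨U₀, hU₀c, hU₀n⟩ := exists_compact_mem_nhds (1 : G)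
  -- the intersection of 𝓛 with the compact set U₀ ×ˢ (K⁻¹ * K) is finite
  have hLclosed : IsClosed ((𝓛 : Set (G × H))) := Subgroup.isClosed_of_discrete
  have hScompact : IsCompact ((𝓛 : Set (G × H)) ∩ U₀ ×ˢ (K⁻¹ * K)) :=
    ((hU₀c.prod hK').inter_left hLclosed)
  have hSdisc : DiscreteTopology ((𝓛 : Set (G × H)) ∩ U₀ ×ˢ (K⁻¹ * K) : Set (G × H)) :=
    DiscreteTopology.of_subset inferInstance Set.inter_subset_left
  have hSfin : ((𝓛 : Set (G × H)) ∩ U₀ ×ˢ (K⁻¹ * K)).Finite := hScompact.finite (isDiscrete_iff_discreteTopology.mpr hSdisc)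
  -- first coordinates of nontrivial elements
  set F : Set G := Prod.fst '' (((𝓛 : Set (G × H)) ∩ U₀ ×ˢ (K⁻¹ * K)) \ {1}) with hF
  have hFfin : F.Finite := hSfin.diff.image _
  have h1F : (1 : G) ∉ F := by
    rintro ⟨ℓ, ⟨⟨hℓL, -⟩, hℓne⟩, hfst⟩
    exact hℓne (hinj hℓL 𝓛.one_mem hfst)
  set U₁ : Set G := interior U₀ \ F with hU₁
  have hU₁n : U₁ ∈ nhds (1 : G) := by
    rw [hU₁]
    exact Filter.inter_mem (interior_mem_nhds.2 hU₀n)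
      ((hFfin.isClosed.isOpen_compl).mem_nhds h1F)
  -- key: any lattice element with fst in U₁ and snd in K⁻¹K is trivial
  have key : ∀ ℓ : G × H, ℓ ∈ 𝓛 → ℓ.1 ∈ U₁ → ℓ.2 ∈ K⁻¹ * K → ℓ = 1 := by
    intro ℓ hℓ h1 h2
    by_contra hne
    exact h1.2 ⟨ℓ, ⟨⟨hℓ, interior_subset h1.1, h2⟩, hne⟩, rfl⟩
  obtain ⟨V, hVn, hV⟩ := exists_nhds_one_split hU₁n
  refine ⟨V ∩ V⁻¹, Filter.inter_mem hVn (inv_mem_nhds_one G hVn), fun x a ha b hb => ?_⟩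
  obtain ⟨⟨h₁, hh₁W, hl₁⟩, ha'⟩ := ha
  obtain ⟨⟨h₂, hh₂W, hl₂⟩, hb'⟩ := hb
  rw [Set.singleton_mul] at ha' hb'
  obtain ⟨u₁, hu₁, rfl⟩ := ha'
  obtain ⟨u₂, hu₂, rfl⟩ := hb'
  have hfst : (x * u₁)⁻¹ * (x * u₂) = u₁⁻¹ * u₂ := by group
  have hmem : ((x * u₁, h₁)⁻¹ * (x * u₂, h₂)) ∈ 𝓛 := 𝓛.mul_mem (𝓛.inv_mem hl₁) hl₂
  have h1' : ((x * u₁, h₁)⁻¹ * (x * u₂, h₂)).1 ∈ U₁ := by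
    show (x * u₁)⁻¹ * (x * u₂) ∈ U₁
    rw [hfst]
    exact hV _ (Set.mem_inv.mp hu₁.2) _ hu₂.1
  have h2' : ((x * u₁, h₁)⁻¹ * (x * u₂, h₂)).2 ∈ K⁻¹ * K := by
    show h₁⁻¹ * h₂ ∈ K⁻¹ * K
    exact Set.mul_mem_mul (Set.inv_mem_inv.mpr (subset_closure hh₁W)) (subset_closure hh₂W)
  have := key _ hmem h1' h2'
  have : (x * u₁)⁻¹ * (x * u₂) = 1 := congrArg Prod.fst this
  have : x * u₁ = x * u₂ := by
    rw [inv_mul_eq_one] at this; exact this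
  exact this
end

section
/- Let (G, H, 𝓛) be a cut-and-project scheme and let W ⊆ H have non-empty interior. Then the projection set ⋏(W) is relatively dense in G: there exists a compact K ⊆ G with ⋏(W)·K = G. -/
open Pointwise

theorem projSet_relatively_dense
    {G H : Type*}
    [TopologicalSpace G] [CommGroup G] [IsTopologicalGroup G] [T2Space G]
    [LocallyCompactSpace G] [SigmaCompactSpace G]
    [TopologicalSpace H] [CommGroup H] [IsTopologicalGroup H] [T2Space H]
    [LocallyCompactSpace H] [SigmaCompactSpace H]
    (𝓛 : Subgroup (G × H)) [DiscreteTopology 𝓛]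
    (hcocompact : ∃ 𝓕 : Set (G × H), IsCompact 𝓕 ∧ 𝓕 * (𝓛 : Set (G × H)) = Set.univ)
    (hinj : Set.InjOn Prod.fst (𝓛 : Set (G × H)))
    (hdense : Dense (Prod.snd '' (𝓛 : Set (G × H))))
    (W : Set H) (hW : (interior W).Nonempty) :
    ∃ K : Set G, IsCompact K ∧ projSet 𝓛 W * K = Set.univ := by
  obtain ⟨𝓕, h𝓕c, h𝓕⟩ := hcocompact
  obtain ⟨w, hw⟩ := hW
  -- open cover of the compact set `snd '' 𝓕`
  set V : 𝓛 → Set H := fun ℓ => (fun y => y * (ℓ : G × H).2) ⁻¹' interior W with hV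
  have hVopen : ∀ ℓ : 𝓛, IsOpen (V ℓ) := fun ℓ =>
    isOpen_interior.preimage (continuous_id.mul continuous_const)
  have hcov : (Prod.snd '' 𝓕) ⊆ ⋃ ℓ : 𝓛, V ℓ := by
    intro x _
    have hopen : IsOpen ((fun y => x * y) ⁻¹' interior W) :=
      isOpen_interior.preimage (continuous_const.mul continuous_id)
    have hne : ((fun y => x * y) ⁻¹' interior W).Nonempty :=
      ⟨x⁻¹ * w, by simp [hw]⟩
    obtain ⟨h, hhmem, hhU⟩ := hdense.exists_mem_open hopen hne
    obtain ⟨l, hl, rfl⟩ := hhmem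
    exact Set.mem_iUnion.2 ⟨⟨l, hl⟩, hhU⟩
  obtain ⟨t, ht⟩ := (h𝓕c.image continuous_snd).elim_finite_subcover V hVopen hcov
  refine ⟨((fun ℓ : 𝓛 => (ℓ : G × H).1⁻¹) '' t) * (Prod.fst '' 𝓕)⁻¹, ?_, ?_⟩
  · exact ((t.finite_toSet.image _).isCompact).mul ((h𝓕c.image continuous_fst).inv)
  · ext g
    simp only [Set.mem_univ, iff_true]
    have hg : (g⁻¹, (1 : H)) ∈ 𝓕 * (𝓛 : Set (G × H)) := by
      rw [h𝓕]; trivial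
    obtain ⟨f, hf, l, hl, hfl⟩ := hg
    have hf1 : f.1 * l.1 = g⁻¹ := congrArg Prod.fst hfl
    have hf2 : f.2 * l.2 = 1 := congrArg Prod.snd hfl
    have hf2' : f.2 = l.2⁻¹ := eq_inv_of_mul_eq_one_left hf2
    have hxf : f.2 ∈ Prod.snd '' 𝓕 := ⟨f, hf, rfl⟩
    obtain ⟨i, hit, hiU⟩ := Set.mem_iUnion₂.1 (ht hxf)
    -- lattice point m = l⁻¹ * i
    set m : G × H := (l⁻¹ * (i : G × H)) with hm
    have hmL : m ∈ 𝓛 := 𝓛.mul_mem (𝓛.inv_mem hl) i.2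
    have hmW : m.2 ∈ W := by
      have : m.2 = f.2 * (i : G × H).2 := by
        simp [hm, hf2', mul_comm]
      rw [this]
      exact interior_subset hiU
    refine ⟨m.1, ⟨m.2, hmW, by simpa using hmL⟩,
      (i : G × H).1⁻¹ * f.1⁻¹,
      ⟨(i : G × H).1⁻¹, ⟨i, hit, rfl⟩, f.1⁻¹,
        Set.inv_mem_inv.2 ⟨f, hf, rfl⟩, rfl⟩, ?_⟩
    have hg' : g = (f.1 * l.1)⁻¹ := by rw [hf1, inv_inv]
    have hm1 : m.1 = l.1⁻¹ * (i : G × H).1 := rfl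
    rw [hm1, hg']
    group
end

section
/- Let (G, H, 𝓛) be a cut-and-project scheme with H second countable (or with L* countable), and suppose W ⊆ H is relatively compact and nowhere dense. Then the weak model set ⋏(W) is hole-repetitive: for every compact K ⊆ G there is a relatively dense set P_K ⊆ G such that ⋏(W) ∩ t⁻¹·K = ∅ for all t ∈ P_K. -/
open Pointwise

theorem projSet_hole_repetitive
    {G H : Type*}
    [TopologicalSpace G] [CommGroup G] [IsTopologicalGroup G] [T2Space G]
    [LocallyCompactSpace G] [SigmaCompactSpace G]
    [TopologicalSpace H] [CommGroup H] [IsTopologicalGroup H] [T2Space H]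
    [LocallyCompactSpace H] [SigmaCompactSpace H] [SecondCountableTopology H]
    (𝓛 : Subgroup (G × H)) [DiscreteTopology 𝓛]
    (hcocompact : ∃ 𝓕 : Set (G × H), IsCompact 𝓕 ∧ 𝓕 * (𝓛 : Set (G × H)) = Set.univ)
    (hinj : Set.InjOn Prod.fst (𝓛 : Set (G × H)))
    (hdense : Dense (Prod.snd '' (𝓛 : Set (G × H))))
    (W : Set H) (hWrc : IsCompact (closure W)) (hWnd : IsNowhereDense W) :
    ∀ K : Set G, IsCompact K →
      ∃ P : Set G, (∃ C : Set G, IsCompact C ∧ P * C = Set.univ) ∧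
        ∀ t ∈ P, projSet 𝓛 W ∩ ({t⁻¹} * K) = ∅ := by
  intro K hK
  classical
  obtain ⟨𝓕, h𝓕c, h𝓕⟩ := hcocompact
  -- 𝓛 is closed
  have hLclosed : IsClosed ((𝓛 : Subgroup (G × H)) : Set (G × H)) :=
    Subgroup.isClosed_of_discrete
  -- 𝓛 is countable
  have hLcount : ((𝓛 : Subgroup (G × H)) : Set (G × H)).Countable := by
    have hcov : ((𝓛 : Subgroup (G × H)) : Set (G × H)) =
        ⋃ n, ((𝓛 : Subgroup (G × H)) : Set (G × H)) ∩ compactCovering (G × H) n := by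
      rw [← Set.inter_iUnion, iUnion_compactCovering, Set.inter_univ]
    rw [hcov]
    refine Set.countable_iUnion fun n => Set.Finite.countable ?_
    have hc : IsCompact (((𝓛 : Subgroup (G × H)) : Set (G × H)) ∩ compactCovering (G × H) n) :=
      (isCompact_compactCovering _ n).inter_left hLclosed
    have hd : DiscreteTopology
        (((𝓛 : Subgroup (G × H)) : Set (G × H)) ∩ compactCovering (G × H) n : Set (G × H)) := by
      have : DiscreteTopology ((𝓛 : Subgroup (G × H)) : Set (G × H)) := ‹DiscreteTopology 𝓛›
      exact DiscreteTopology.of_subset this Set.inter_subset_left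
    exact hc.finite ⟨hd⟩
  haveI hLcnt : Countable 𝓛 := hLcount.to_subtype
  haveI : IsClosed ((𝓛 : Subgroup (G × H)) : Set (G × H)) := hLclosed
  -- The quotient torus
  set T := (G × H) ⧸ 𝓛 with hT
  have hmkcont : Continuous (QuotientGroup.mk : G × H → T) := QuotientGroup.continuous_mk
  -- T is compact
  have hTuniv : (Set.univ : Set T) = QuotientGroup.mk '' 𝓕 := by
    apply Set.eq_of_subset_of_subset
    · rintro x -
      obtain ⟨p, rfl⟩ := QuotientGroup.mk_surjective x
      have hp : p ∈ 𝓕 * (𝓛 : Set (G × H)) := by rw [h𝓕]; trivial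
      obtain ⟨f, hf, ℓ, hℓ, rfl⟩ := hp
      refine ⟨f, hf, ?_⟩
      symm
      rw [QuotientGroup.eq]
      have heq : (f * ℓ)⁻¹ * f = ℓ⁻¹ := by group
      show (f * ℓ)⁻¹ * f ∈ 𝓛
      rw [heq]; exact 𝓛.inv_mem hℓ
    · exact fun x _ => trivial
  haveI : CompactSpace T := by
    refine ⟨?_⟩
    rw [hTuniv]
    exact h𝓕c.image hmkcont
  -- Ω : image of K ×ˢ closure W in T
  set Ω : Set T := QuotientGroup.mk '' (K ×ˢ closure W) with hΩ
  have hΩc : IsCompact Ω := (hK.prod hWrc).image hmkcont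
  have hΩclosed : IsClosed Ω := hΩc.isClosed
  -- Baire: Ω ≠ univ
  have hbaire : Dense (⋂ ℓ : 𝓛, ((K ×ˢ closure W) * {(ℓ : G × H)})ᶜ) := by
    refine dense_iInter_of_isOpen (fun ℓ => ?_) (fun ℓ => ?_)
    · exact (((hK.prod hWrc).mul isCompact_singleton).isClosed).isOpen_compl
    · rw [← interior_eq_empty_iff_dense_compl]
      have him : (K ×ˢ closure W) * {(ℓ : G × H)} =
          (Homeomorph.mulRight (ℓ : G × H)) '' (K ×ˢ closure W) := by
        rw [Set.mul_singleton]; rfl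
      rw [him, ← Homeomorph.image_interior, interior_prod_eq, hWnd, Set.prod_empty,
        Set.image_empty]
  obtain ⟨z, hz⟩ : (⋂ ℓ : 𝓛, ((K ×ˢ closure W) * {(ℓ : G × H)})ᶜ).Nonempty :=
    hbaire.nonempty
  have hzΩ : (QuotientGroup.mk z : T) ∉ Ω := by
    intro hmem
    obtain ⟨p, hp, hpz⟩ := hmem
    have hℓ : p⁻¹ * z ∈ 𝓛 := by rwa [QuotientGroup.eq] at hpz
    have hzmem : z ∈ (K ×ˢ closure W) * {((⟨p⁻¹ * z, hℓ⟩ : 𝓛) : G × H)} := by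
      rw [Set.mul_singleton]
      exact ⟨p, hp, by group⟩
    have := Set.mem_iInter.1 hz ⟨p⁻¹ * z, hℓ⟩
    exact this hzmem
  -- density of the image of G × {1} in T
  have hφdense : Dense (Set.range fun t : G => (QuotientGroup.mk (t, (1 : H)) : T)) := by
    rw [dense_iff_inter_open]
    intro U hU hUne
    obtain ⟨x, hxU⟩ := hUne
    obtain ⟨p, rfl⟩ := QuotientGroup.mk_surjective x
    have hVopen : IsOpen {h : H | (p.1, h) ∈ (QuotientGroup.mk : G × H → T) ⁻¹' U} := by
      exact (hU.preimage hmkcont).preimage (Continuous.prodMk_right p.1)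
    have hVne : {h : H | (p.1, h) ∈ (QuotientGroup.mk : G × H → T) ⁻¹' U}.Nonempty :=
      ⟨p.2, by simpa using hxU⟩
    obtain ⟨b, ⟨ℓ, hℓL, hℓb⟩, hbV⟩ := hdense.exists_mem_open hVopen hVne
    refine ⟨QuotientGroup.mk (p.1, b), ?_, ⟨p.1 * ℓ.1⁻¹, ?_⟩⟩
    · exact hbV
    · rw [QuotientGroup.eq]
      have : (p.1 * ℓ.1⁻¹, (1 : H))⁻¹ * (p.1, b) = (ℓ.1, ℓ.2) := by
        rw [← hℓb]
        ext <;> simp <;> group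
      rw [this]
      simpa using hℓL
  -- the open cover of T
  set Ux : G → Set T := fun g =>
    (fun y : T => y * (QuotientGroup.mk (g, (1 : H)) : T)⁻¹) ⁻¹' Ωᶜ with hUx
  have hUxopen : ∀ g : G, IsOpen (Ux g) := fun g =>
    hΩclosed.isOpen_compl.preimage (continuous_id.mul continuous_const)
  have hcover : (Set.univ : Set T) ⊆ ⋃ g : G, Ux g := by
    intro x _
    have hVopen : IsOpen ((fun y : T => x * y⁻¹) ⁻¹' Ωᶜ) :=
      hΩclosed.isOpen_compl.preimage (continuous_const.mul continuous_inv)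
    have hVne : ((fun y : T => x * y⁻¹) ⁻¹' Ωᶜ).Nonempty := by
      refine ⟨x * (QuotientGroup.mk z : T)⁻¹, ?_⟩
      show x * (x * (QuotientGroup.mk z : T)⁻¹)⁻¹ ∉ Ω
      rw [mul_inv_rev, inv_inv, mul_comm, mul_assoc, inv_mul_cancel, mul_one]
      exact hzΩ
    obtain ⟨y, ⟨g, rfl⟩, hyV⟩ := hφdense.exists_mem_open hVopen hVne
    exact Set.mem_iUnion.2 ⟨g, hyV⟩
  obtain ⟨s, hs⟩ := isCompact_univ.elim_finite_subcover Ux hUxopen hcover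
  -- the set of holes
  refine ⟨{t : G | (QuotientGroup.mk (t, (1 : H)) : T) ∉ Ω}, ⟨(↑s : Set G),
    s.finite_toSet.isCompact, ?_⟩, ?_⟩
  · apply Set.eq_univ_of_forall
    intro t
    have : (QuotientGroup.mk (t, (1 : H)) : T) ∈ ⋃ g ∈ s, Ux g := hs trivial
    obtain ⟨g, hgs, hg⟩ := Set.mem_iUnion₂.1 this
    refine ⟨t * g⁻¹, ?_, g, hgs, by group⟩
    have hEq : (QuotientGroup.mk (t, (1 : H)) : T) * (QuotientGroup.mk (g, (1 : H)) : T)⁻¹ =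
        QuotientGroup.mk (t * g⁻¹, (1 : H)) := by
      rw [← QuotientGroup.mk_inv, ← QuotientGroup.mk_mul]
      congr 1
      ext <;> simp
    simp only [Ux, Set.mem_preimage, hEq] at hg
    exact hg
  · intro t ht
    rw [Set.eq_empty_iff_forall_notMem]
    rintro g ⟨⟨h, hhW, hgh⟩, hgK⟩
    obtain ⟨a, ha, k, hk, hak⟩ := hgK
    have ha' : a = t⁻¹ := by simpa using ha
    apply ht
    refine ⟨(k, h), ⟨hk, subset_closure hhW⟩, ?_⟩
    symm
    rw [QuotientGroup.eq]
    have : (t, (1 : H))⁻¹ * (k, h) = (g, h) := by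
      rw [← hak, ha']
      ext <;> simp <;> group
    rw [this]
    exact hgh
end

section
/- Consider the internal space H = ∏_p ℤⁿ/pᵏℤⁿ (product over all primes p) with product of normalised counting measures θ_H, and the window W = ∏_p (ℤⁿ/pᵏℤⁿ ∖ {0}) for the k-free lattice points (nk > 1). Then W is closed with empty interior (hence W = ∂W and W is nowhere dense), and θ_H(W) = ∏_p (1 − p^{−nk}) = 1/ζ(nk) > 0. -/
open MeasureTheory

/-- Each finite factor `ℤⁿ/pᵏℤⁿ` carries the discrete topology. -/
instance (m : ℕ) : TopologicalSpace (ZMod m) := ⊥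

instance (m : ℕ) : DiscreteTopology (ZMod m) := ⟨rfl⟩

instance (m : ℕ) : MeasurableSpace (ZMod m) := ⊤

instance (m : ℕ) : MeasurableSingletonClass (ZMod m) :=
  ⟨fun _ => MeasurableSpace.measurableSet_top⟩

theorem kfree_window_properties (n k : ℕ) (hnk : 1 < n * k)
    (θ : Measure (∀ p : Nat.Primes, Fin n → ZMod ((p : ℕ) ^ k)))
    [IsProbabilityMeasure θ]
    -- `θ` is the product over all primes of the normalised counting measures:
    (hθ : ∀ (T : Finset Nat.Primes)
        (s : ∀ p : Nat.Primes, Set (Fin n → ZMod ((p : ℕ) ^ k))),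
        θ {f | ∀ p ∈ T, f p ∈ s p} =
          ∏ p ∈ T, (Nat.card (s p) : ENNReal) / (Nat.card (Fin n → ZMod ((p : ℕ) ^ k)))) :
    IsClosed {f : ∀ p : Nat.Primes, Fin n → ZMod ((p : ℕ) ^ k) | ∀ p, f p ≠ 0} ∧
    interior {f : ∀ p : Nat.Primes, Fin n → ZMod ((p : ℕ) ^ k) | ∀ p, f p ≠ 0} = ∅ ∧
    frontier {f : ∀ p : Nat.Primes, Fin n → ZMod ((p : ℕ) ^ k) | ∀ p, f p ≠ 0} =
      {f | ∀ p, f p ≠ 0} ∧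
    IsNowhereDense {f : ∀ p : Nat.Primes, Fin n → ZMod ((p : ℕ) ^ k) | ∀ p, f p ≠ 0} ∧
    θ {f | ∀ p, f p ≠ 0} =
      ∏' p : Nat.Primes, (1 - ((p : ℕ) : ENNReal) ^ (-(n * k : ℤ))) ∧
    0 < θ {f | ∀ p, f p ≠ 0} ∧
    ((θ {f | ∀ p, f p ≠ 0}).toReal : ℂ) = (riemannZeta (n * k))⁻¹ := by
  set S : Set (∀ p : Nat.Primes, Fin n → ZMod ((p : ℕ) ^ k)) := {f | ∀ p, f p ≠ 0} with hS
  have instNZ : ∀ p : Nat.Primes, NeZero ((p : ℕ) ^ k) :=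
    fun p => ⟨pow_ne_zero _ p.2.pos.ne'⟩
  -- topology
  have hclosed : IsClosed S := by
    have : S = ⋂ p : Nat.Primes, (fun f => f p) ⁻¹' {x | x ≠ 0} := by
      ext f; simp [hS, Set.mem_iInter]
    rw [this]
    exact isClosed_iInter fun p =>
      (isClosed_discrete _).preimage (continuous_apply p)
  have hint : interior S = ∅ := by
    rw [Set.eq_empty_iff_forall_notMem]
    intro x hx
    have hxS : S ∈ nhds x := mem_interior_iff_mem_nhds.mp hx
    rw [nhds_pi, Filter.mem_pi] at hxS
    obtain ⟨I, hIfin, t, ht, hsub⟩ := hxS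
    obtain ⟨p₀, hp₀⟩ := hIfin.exists_notMem
    have hmem : Function.update x p₀ 0 ∈ I.pi t := by
      intro p hp
      rw [Function.update_of_ne (fun h => hp₀ (by rw [← h]; exact hp))]
      exact mem_of_mem_nhds (ht p)
    exact hsub hmem p₀ (Function.update_self p₀ 0 x)
  refine ⟨hclosed, hint, ?_, ?_, ?_⟩
  · rw [hclosed.frontier_eq, hint, Set.diff_empty]
  · rw [IsNowhereDense, hclosed.closure_eq]; exact hint
  -- measure theory
  set a : Nat.Primes → ENNReal := fun p => 1 - ((p : ℕ) : ENNReal) ^ (-(n * k : ℤ)) with ha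
  have hm1 : 1 ≤ n * k := hnk.le
  have haeq : ∀ p : Nat.Primes,
      a p = 1 - ((((p : ℕ) ^ (n * k) : ℕ)) : ENNReal)⁻¹ := by
    intro p
    have hp0 : ((p : ℕ) : ENNReal) ≠ 0 := by
      exact_mod_cast Nat.cast_ne_zero.mpr p.2.pos.ne'
    have hpt : ((p : ℕ) : ENNReal) ≠ ⊤ := ENNReal.natCast_ne_top _
    simp only [ha]
    rw [show (-(n * k : ℤ)) = -((n * k : ℕ) : ℤ) by push_cast; ring,
      ENNReal.zpow_neg, zpow_natCast, Nat.cast_pow]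
  have hcard : ∀ p : Nat.Primes,
      ((Nat.card {x : Fin n → ZMod ((p : ℕ) ^ k) | x ≠ 0} : ENNReal) /
        (Nat.card (Fin n → ZMod ((p : ℕ) ^ k)))) = a p := by
    intro p
    haveI := instNZ p
    have hcard_tot : Nat.card (Fin n → ZMod ((p : ℕ) ^ k)) = (p : ℕ) ^ (n * k) := by
      simp [Nat.card_fun, Nat.card_zmod, ← pow_mul, mul_comm k n]
    have hA1 : 1 ≤ (p : ℕ) ^ (n * k) := Nat.one_le_pow _ _ p.2.pos
    have hcard_set : Nat.card {x : Fin n → ZMod ((p : ℕ) ^ k) | x ≠ 0}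
        = (p : ℕ) ^ (n * k) - 1 := by
      have h1 : Nat.card {x : Fin n → ZMod ((p : ℕ) ^ k) | x ≠ 0}
          = Fintype.card {x : Fin n → ZMod ((p : ℕ) ^ k) // ¬ x = 0} :=
        Nat.card_eq_fintype_card
      rw [h1, Fintype.card_subtype_compl, Fintype.card_subtype_eq, ← hcard_tot,
        Nat.card_eq_fintype_card]
    rw [hcard_set, hcard_tot, haeq p]
    have hA0 : (((p : ℕ) ^ (n * k) : ℕ) : ENNReal) ≠ 0 := by
      exact_mod_cast Nat.cast_ne_zero.mpr (Nat.one_le_iff_ne_zero.mp hA1)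
    have hAt : (((p : ℕ) ^ (n * k) : ℕ) : ENNReal) ≠ ⊤ := ENNReal.natCast_ne_top _
    rw [ENNReal.natCast_sub, Nat.cast_one,
      ENNReal.sub_div (fun _ _ => hA0), ENNReal.div_self hA0 hAt, one_div]
  -- the cylinder sets
  set C : Finset Nat.Primes → Set (∀ p : Nat.Primes, Fin n → ZMod ((p : ℕ) ^ k)) :=
    fun T => {f | ∀ p ∈ T, f p ≠ 0} with hC
  have hCmeas : ∀ T, MeasurableSet (C T) := by
    intro T
    have : C T = ⋂ p ∈ T, (fun f => f p) ⁻¹' {x | x ≠ 0} := by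
      ext f; simp [hC]
    rw [this]
    refine MeasurableSet.biInter T.countable_toSet fun p _ => ?_
    haveI := instNZ p
    exact measurable_pi_apply p (measurableSet_singleton 0).compl
  have hCmeasure : ∀ T, θ (C T) = ∏ p ∈ T, a p := by
    intro T
    have h := hθ T (fun p => {x | x ≠ 0})
    have h2 : C T = {f | ∀ p ∈ T, f p ∈ {x : Fin n → ZMod ((p : ℕ) ^ k) | x ≠ 0}} := rfl
    rw [h2, h]
    exact Finset.prod_congr rfl fun p _ => hcard p
  have hSint : S = ⋂ T : Finset Nat.Primes, C T := by
    ext f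
    constructor
    · intro hf
      exact Set.mem_iInter.mpr fun T p _ => hf p
    · intro hf p
      exact Set.mem_iInter.mp hf {p} p (Finset.mem_singleton_self p)
  have hdir : Directed (· ⊇ ·) C := by
    intro T₁ T₂
    exact ⟨T₁ ∪ T₂, fun f hf p hp => hf p (Finset.mem_union_left _ hp),
      fun f hf p hp => hf p (Finset.mem_union_right _ hp)⟩
  have hiInf : θ S = ⨅ T : Finset Nat.Primes, ∏ p ∈ T, a p := by
    rw [hSint, Directed.measure_iInter (fun T => (hCmeas T).nullMeasurableSet) hdir
      ⟨∅, measure_ne_top θ _⟩]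
    exact iInf_congr hCmeasure
  have hale : ∀ p, a p ≤ 1 := fun p => by rw [haeq p]; exact tsub_le_self
  have hPanti : Antitone (fun T : Finset Nat.Primes => ∏ p ∈ T, a p) := by
    intro T₁ T₂ h
    calc ∏ p ∈ T₂, a p = (∏ p ∈ T₂ \ T₁, a p) * ∏ p ∈ T₁, a p :=
          (Finset.prod_sdiff h).symm
      _ ≤ 1 * ∏ p ∈ T₁, a p := by
          gcongr
          exact Finset.prod_le_one (fun p _ => zero_le) (fun p _ => hale p)
      _ = ∏ p ∈ T₁, a p := one_mul _
  have hProd : HasProd a (θ S) := by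
    rw [hiInf]
    exact tendsto_atTop_iInf hPanti
  -- the complex product
  have hθfin : θ S ≠ ⊤ := measure_ne_top θ S
  have hs_re : 1 < ((n : ℂ) * (k : ℂ)).re := by
    rw [show ((n : ℂ) * (k : ℂ)) = ((n * k : ℕ) : ℂ) by push_cast; ring, Complex.natCast_re]
    exact_mod_cast hnk
  have hat : ∀ p : Nat.Primes, (a p).toReal = 1 - (((p : ℕ) : ℝ) ^ (n * k))⁻¹ := by
    intro p
    have h1le : (1 : ENNReal) ≤ (((p : ℕ) ^ (n * k) : ℕ) : ENNReal) := by
      exact_mod_cast Nat.one_le_cast.mpr (Nat.one_le_pow _ _ p.2.pos)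
    rw [haeq p, ENNReal.toReal_sub_of_le (ENNReal.inv_le_one.mpr h1le) ENNReal.one_ne_top,
      ENNReal.toReal_inv, ENNReal.toReal_one, ENNReal.toReal_natCast]
    push_cast
    ring
  have hR : HasProd (fun p => (a p).toReal) (θ S).toReal := by
    have h1 : Filter.Tendsto (fun T : Finset Nat.Primes => (∏ p ∈ T, a p).toReal)
        Filter.atTop (nhds (θ S).toReal) := (ENNReal.tendsto_toReal hθfin).comp hProd
    exact h1.congr fun T => ENNReal.toReal_prod _ _
  set g : Nat.Primes → ℂ := fun p => 1 - (((p : ℕ) : ℂ) ^ (n * k))⁻¹ with hgdef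
  have hgC : HasProd g (((θ S).toReal : ℝ) : ℂ) := by
    have h0 : HasProd (fun p => (((a p).toReal : ℝ) : ℂ)) (((θ S).toReal : ℝ) : ℂ) :=
      hR.map Complex.ofRealHom Complex.continuous_ofReal
    have he : (fun p => (((a p).toReal : ℝ) : ℂ)) = g := by
      funext p
      rw [hat p, hgdef]
      push_cast
      ring
    rwa [he] at h0
  have hζ : HasProd (fun p => (g p)⁻¹) (riemannZeta ((n : ℂ) * (k : ℂ))) := by
    have h0 := riemannZeta_eulerProduct_hasProd hs_re
    have he : (fun p : Nat.Primes => (1 - (p : ℂ) ^ (-((n : ℂ) * (k : ℂ))))⁻¹)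
        = fun p => (g p)⁻¹ := by
      funext p
      rw [hgdef]
      congr 1
      rw [show ((n : ℂ) * (k : ℂ)) = ((n * k : ℕ) : ℂ) by push_cast; ring,
        Complex.cpow_neg, Complex.cpow_natCast]
    rwa [he] at h0
  have hg0 : ∀ p : Nat.Primes, g p ≠ 0 := by
    intro p h
    have h2 : ((((p : ℕ) : ℂ)) ^ (n * k))⁻¹ = 1 := by
      rw [hgdef] at h
      have := sub_eq_zero.mp h
      exact this.symm
    have hgt : (1 : ℝ) < (((p : ℕ) : ℝ)) ^ (n * k) := by
      have h2le : (2 : ℝ) ≤ ((p : ℕ) : ℝ) := by exact_mod_cast p.2.two_le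
      exact one_lt_pow₀ (by linarith) (by omega)
    have hnorm : ‖((((p : ℕ) : ℂ)) ^ (n * k))⁻¹‖ < 1 := by
      rw [norm_inv, norm_pow, Complex.norm_natCast]
      exact inv_lt_one_of_one_lt₀ hgt
    rw [h2, norm_one] at hnorm
    exact lt_irrefl _ hnorm
  have hone : (((θ S).toReal : ℝ) : ℂ) * riemannZeta ((n : ℂ) * (k : ℂ)) = 1 := by
    have h1 : HasProd (fun p => g p * (g p)⁻¹)
        ((((θ S).toReal : ℝ) : ℂ) * riemannZeta ((n : ℂ) * (k : ℂ))) := hgC.mul hζ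
    have h2 : (fun p : Nat.Primes => g p * (g p)⁻¹) = fun _ => (1 : ℂ) :=
      funext fun p => mul_inv_cancel₀ (hg0 p)
    rw [h2] at h1
    exact h1.unique hasProd_one
  have hζne : riemannZeta ((n : ℂ) * (k : ℂ)) ≠ 0 := riemannZeta_ne_zero_of_one_lt_re hs_re
  have hfinal : (((θ S).toReal : ℝ) : ℂ) = (riemannZeta ((n : ℂ) * (k : ℂ)))⁻¹ :=
    eq_inv_of_mul_eq_one_left hone
  refine ⟨hProd.tprod_eq.symm, ?_, hfinal⟩
  rw [pos_iff_ne_zero]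
  intro h0
  rw [h0] at hfinal
  simp only [ENNReal.toReal_zero, Complex.ofReal_zero] at hfinal
  exact hζne (inv_eq_zero.mp hfinal.symm)
end
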